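/- arXiv:2404.17190 — 7 statements merged into one kernel-verified Lean document; each statement's English description precedes it below -/
import Mathlib

section
/- Let h be a Legendre function with domain X and f convex and differentiable on the interior of dom h. If Lh − f is convex on int dom h, then f(y) ≤ f(x) + ⟨∇f(x), y − x⟩ + L·D_h(y, x) for all x, y in int dom h, where D_h(y,x) = h(y) − h(x) − ⟨∇h(x), y − x⟩. -/
/-! The function `L * h - f` is convex, so it lies above its tangent at `x`; evaluated at `y` and
rearranged, this tangent inequality is the Bregman descent inequality. -/

open scoped RealInnerProductSpace
open Filter

theorem ConvexOn.add_apply_sub_le_of_hasFDerivAt {E : Type*} [NormedAddCommGroup E]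
    [NormedSpace ℝ E] {s : Set E} {g : E → ℝ} {g' : E →L[ℝ] ℝ} {x y : E}
    (hg : ConvexOn ℝ s g) (hx : x ∈ s) (hy : y ∈ s) (hd : HasFDerivAt g g' x) :
    g x + g' (y - x) ≤ g y := by
  let γ : ℝ →ᵃ[ℝ] E := AffineMap.lineMap x y
  have hd₀ : HasDerivAt (g ∘ γ) (g' (y - x)) 0 := by
    have hd' : HasFDerivAt g g' (γ 0) := by simpa [γ] using hd
    exact hd'.comp_hasDerivAt 0 AffineMap.hasDerivAt_lineMap
  have hslope := (hg.comp_affineMap γ).le_slope_of_hasDerivAt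
    (by simpa [γ] using hx) (by simpa [γ] using hy) one_pos hd₀
  simp only [slope_def_field, Function.comp_apply, γ, AffineMap.lineMap_apply_zero,
    AffineMap.lineMap_apply_one, sub_zero, div_one] at hslope
  linarith

theorem stmt4_general (n : ℕ) (X : Set (EuclideanSpace ℝ (Fin n)))
    (h : EuclideanSpace ℝ (Fin n) → ℝ)
    (hhdiff : DifferentiableOn ℝ h (interior X))
    (f : EuclideanSpace ℝ (Fin n) → ℝ)
    (hfdiff : DifferentiableOn ℝ f (interior X))
    (L : ℝ)
    (hrel : ConvexOn ℝ (interior X) (fun z => L * h z - f z)) :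
    ∀ x ∈ interior X, ∀ y ∈ interior X,
      f y ≤ f x + ⟪gradient f x, y - x⟫ +
        L * (h y - h x - ⟪gradient h x, y - x⟫) := by
  intro x hx y hy
  have hX : interior X ∈ nhds x := isOpen_interior.mem_nhds hx
  have hd : HasFDerivAt (fun z => L * h z - f z) (L • fderiv ℝ h x - fderiv ℝ f x) x :=
    ((hhdiff.differentiableAt hX).hasFDerivAt.const_mul L).sub
      (hfdiff.differentiableAt hX).hasFDerivAt
  have htangent := hrel.add_apply_sub_le_of_hasFDerivAt hx hy hd
  simp only [sub_apply, smul_apply, smul_eq_mul] at htangent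
  rw [inner_gradient_left, inner_gradient_left]
  linarith

/-- Bregman descent lemma: if `L•h − f` is convex on the interior of the domain of the
Legendre function `h`, then `f(y) ≤ f(x) + ⟨∇f(x), y−x⟩ + L D_h(y,x)`. -/
theorem stmt4 (n : ℕ) (X : Set (EuclideanSpace ℝ (Fin n)))
    (hXclosed : IsClosed X) (hXconv : Convex ℝ X) (hXint : (interior X).Nonempty)
    (h : EuclideanSpace ℝ (Fin n) → ℝ)
    (hhconv : ConvexOn ℝ X h) (hhlsc : LowerSemicontinuous h)
    (hhdiff : DifferentiableOn ℝ h (interior X))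
    (hhstrict : StrictConvexOn ℝ (interior X) h)
    (hhLeg : ∀ (z : ℕ → EuclideanSpace ℝ (Fin n)) (y : EuclideanSpace ℝ (Fin n)),
      (∀ k, z k ∈ interior X) → y ∈ frontier X → Tendsto z atTop (nhds y) →
      Tendsto (fun k => ‖gradient h (z k)‖) atTop atTop)
    (f : EuclideanSpace ℝ (Fin n) → ℝ)
    (hfconv : ConvexOn ℝ (interior X) f)
    (hfdiff : DifferentiableOn ℝ f (interior X))
    (L : ℝ) (hL : 0 < L)
    (hrel : ConvexOn ℝ (interior X) (fun z => L * h z - f z)) :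
    ∀ x ∈ interior X, ∀ y ∈ interior X,
      f y ≤ f x + ⟪gradient f x, y - x⟫ +
        L * (h y - h x - ⟪gradient h x, y - x⟫) :=
  stmt4_general n X h hhdiff f hfdiff L hrel
end

section
/- Let A ∈ ℝ₊^{m×n} have non-null rows a_i and b ∈ ℝ₊₊^m. The function f(x) = KL(Ax, b) = Σᵢ (⟨aᵢ,x⟩ log(⟨aᵢ,x⟩/bᵢ) − ⟨aᵢ,x⟩ + bᵢ) is L-smooth relative to the Boltzmann–Shannon entropy h(x) = Σⱼ xⱼ log xⱼ on int ℝ₊ⁿ, with L = maxⱼ Σᵢ aᵢⱼ; that is, Lh − f is convex on int ℝ₊ⁿ. -/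
/-! Write `φ t = t log t`. Up to an affine function of `x`, `L h - f` is
`∑ⱼ (L - ∑ᵢ aᵢⱼ) φ(xⱼ) + ∑ᵢ (∑ⱼ aᵢⱼ φ(xⱼ) - φ(⟨aᵢ, x⟩))`.
The first sum is convex because `L` dominates every column sum. In each row,
`∑ⱼ wⱼ φ(xⱼ) - φ(⟨w, x⟩) = ∑ⱼ wⱼ xⱼ log (xⱼ / ⟨w, x⟩)` is a nonnegative combination of the jointly
convex perspective `(u, v) ↦ u log (u / v)` of `φ`, precomposed with linear maps. -/

open Real Set

theorem ConvexOn.fun_sum {𝕜 E β ι : Type*} [Semiring 𝕜] [PartialOrder 𝕜] [AddCommMonoid E]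
    [AddCommMonoid β] [PartialOrder β] [IsOrderedAddMonoid β] [SMul 𝕜 E] [DistribSMul 𝕜 β]
    {s : Set E} {t : Finset ι} {f : ι → E → β} (hs : Convex 𝕜 s)
    (hf : ∀ i ∈ t, ConvexOn 𝕜 s (f i)) : ConvexOn 𝕜 s fun x => ∑ i ∈ t, f i x := by
  refine ⟨hs, fun x hx y hy a b ha hb hab => ?_⟩
  simp only [Finset.smul_sum, ← Finset.sum_add_distrib]
  exact Finset.sum_le_sum fun i hi => (hf i hi).2 hx hy ha hb hab

theorem convexOn_mul_log_div :
    ConvexOn ℝ (Ioi 0 ×ˢ Ioi 0) fun p : ℝ × ℝ => p.1 * log (p.1 / p.2) := by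
  refine ⟨(convex_Ioi 0).prod (convex_Ioi 0), ?_⟩
  rintro ⟨u₁, v₁⟩ ⟨hu₁, hv₁⟩ ⟨u₂, v₂⟩ ⟨hu₂, hv₂⟩ a b ha hb hab
  simp only [mem_Ioi] at hu₁ hv₁ hu₂ hv₂
  simp only [Prod.smul_mk, Prod.mk_add_mk, smul_eq_mul]
  have hv : 0 < a * v₁ + b * v₂ := by
    rcases ha.eq_or_lt with rfl | ha
    · simp_all
    · positivity
  -- the perspective of `t ↦ t log t`: Jensen at `uₖ / vₖ` with weights proportional to `vₖ`
  have key := convexOn_mul_log.2 (mem_Ici.2 (div_pos hu₁ hv₁).le)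
    (mem_Ici.2 (div_pos hu₂ hv₂).le) (by positivity : 0 ≤ a * v₁ / (a * v₁ + b * v₂))
    (by positivity : 0 ≤ b * v₂ / (a * v₁ + b * v₂)) (by field_simp)
  have hmix : a * v₁ / (a * v₁ + b * v₂) * (u₁ / v₁) + b * v₂ / (a * v₁ + b * v₂) * (u₂ / v₂) =
      (a * u₁ + b * u₂) / (a * v₁ + b * v₂) := by
    field_simp
  simp only [smul_eq_mul, hmix] at key
  calc (a * u₁ + b * u₂) * log ((a * u₁ + b * u₂) / (a * v₁ + b * v₂))
      = (a * v₁ + b * v₂) * ((a * u₁ + b * u₂) / (a * v₁ + b * v₂) *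
          log ((a * u₁ + b * u₂) / (a * v₁ + b * v₂))) := by field_simp
    _ ≤ (a * v₁ + b * v₂) * (a * v₁ / (a * v₁ + b * v₂) * (u₁ / v₁ * log (u₁ / v₁)) +
          b * v₂ / (a * v₁ + b * v₂) * (u₂ / v₂ * log (u₂ / v₂))) := by gcongr
    _ = a * (u₁ * log (u₁ / v₁)) + b * (u₂ * log (u₂ / v₂)) := by field_simp

section PositiveOrthant

variable {ι : Type*}

theorem convex_setOf_forall_pos : Convex ℝ {x : ι → ℝ | ∀ j, 0 < x j} := by
  simpa [Set.pi] using convex_pi (s := univ) fun (j : ι) _ => convex_Ioi (0 : ℝ)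

theorem convexOn_apply_mul_log (j : ι) :
    ConvexOn ℝ {x : ι → ℝ | ∀ j, 0 < x j} fun x => x j * log (x j) :=
  (convexOn_mul_log.comp_linearMap (LinearMap.proj j)).subset (fun _ hx => (hx j).le)
    convex_setOf_forall_pos

theorem convexOn_weightedEntropy_sub_entropy_dotProduct [Fintype ι] (w : ι → ℝ)
    (hw : ∀ j, 0 ≤ w j) :
    ConvexOn ℝ {x : ι → ℝ | ∀ j, 0 < x j}
      fun x => ∑ j, w j * (x j * log (x j)) - w ⬝ᵥ x * log (w ⬝ᵥ x) := by
  rcases eq_or_ne w 0 with rfl | hw₀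
  · simpa using convexOn_const 0 convex_setOf_forall_pos
  have hpos : ∀ x : ι → ℝ, (∀ j, 0 < x j) → 0 < w ⬝ᵥ x := fun x hx => by
    obtain ⟨j, hj⟩ := Function.ne_iff.1 hw₀
    exact Finset.sum_pos' (fun k _ => mul_nonneg (hw k) (hx k).le)
      ⟨j, Finset.mem_univ j, mul_pos ((hw j).lt_of_ne' hj) (hx j)⟩
  have hterm (j : ι) : ConvexOn ℝ {x : ι → ℝ | ∀ j, 0 < x j}
      fun x => w j * (x j * log (x j / w ⬝ᵥ x)) := by
    refine ((convexOn_mul_log_div.comp_linearMap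
      ((LinearMap.proj j).prod (dotProductBilin ℝ ℝ w))).subset ?_ convex_setOf_forall_pos).smul
        (hw j)
    exact fun x hx => ⟨hx j, hpos x hx⟩
  refine (ConvexOn.fun_sum (t := .univ) convex_setOf_forall_pos fun j _ => hterm j).congr
    fun x hx => ?_
  simp only [log_div (hx _).ne' (hpos x hx).ne', mul_sub, Finset.sum_sub_distrib]
  rw [dotProduct, Finset.sum_mul]
  simp only [mul_assoc]

theorem convexOn_weightedEntropy_sub_kl_dotProduct [Fintype ι] (w : ι → ℝ)
    (hw : ∀ j, 0 ≤ w j) {β : ℝ} (hβ : β ≠ 0) :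
    ConvexOn ℝ {x : ι → ℝ | ∀ j, 0 < x j}
      fun x => ∑ j, w j * (x j * log (x j)) - (w ⬝ᵥ x * log (w ⬝ᵥ x / β) - w ⬝ᵥ x + β) := by
  have haff : ConvexOn ℝ {x : ι → ℝ | ∀ j, 0 < x j} fun x => (log β + 1) * w ⬝ᵥ x - β := by
    refine ((((log β + 1) • dotProductBilin ℝ ℝ w).convexOn convex_setOf_forall_pos).add_const
      (-β)).congr fun x _ => ?_
    simp [sub_eq_add_neg]
  refine ((convexOn_weightedEntropy_sub_entropy_dotProduct w hw).add haff).congr fun x _ => ?_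
  have hlog : w ⬝ᵥ x * log (w ⬝ᵥ x / β) = w ⬝ᵥ x * log (w ⬝ᵥ x) - w ⬝ᵥ x * log β := by
    rcases eq_or_ne (w ⬝ᵥ x) 0 with h | h
    · simp [h]
    · rw [log_div h hβ, mul_sub]
  simp only [Pi.add_apply, hlog]
  ring

end PositiveOrthant

theorem stmt9_general (m n : ℕ) (hn : 0 < n) (A : Matrix (Fin m) (Fin n) ℝ)
    (hA : ∀ i j, 0 ≤ A i j)
    (b : Fin m → ℝ) (hb : ∀ i, 0 < b i)
    (L : ℝ)
    (hLdef : L = Finset.univ.sup'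
      ⟨(⟨0, hn⟩ : Fin n), Finset.mem_univ _⟩ (fun j => ∑ i, A i j)) :
    ConvexOn ℝ {x : Fin n → ℝ | ∀ j, 0 < x j}
      (fun x => L * (∑ j, x j * Real.log (x j)) -
        ∑ i, ((∑ j, A i j * x j) * Real.log ((∑ j, A i j * x j) / b i)
          - (∑ j, A i j * x j) + b i)) := by
  have hcol (j : Fin n) : ∑ i, A i j ≤ L :=
    hLdef ▸ Finset.le_sup' (fun j => ∑ i, A i j) (Finset.mem_univ j)
  have hsplit := (ConvexOn.fun_sum (t := .univ) convex_setOf_forall_pos fun j _ =>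
      (convexOn_apply_mul_log j).smul (sub_nonneg.2 (hcol j))).add
    (ConvexOn.fun_sum (t := .univ) convex_setOf_forall_pos fun i _ =>
      convexOn_weightedEntropy_sub_kl_dotProduct (A i) (hA i) (hb i).ne')
  refine hsplit.congr fun x _ => ?_
  simp only [Pi.add_apply, smul_eq_mul, dotProduct, sub_mul, Finset.sum_sub_distrib,
    Finset.sum_mul, Finset.mul_sum]
  rw [Finset.sum_comm (γ := Fin m)]
  ring

/-- Relative smoothness of the Kullback–Leibler objective `f(x) = KL(Ax, b)` with respect
to the Boltzmann–Shannon entropy, with constant `L = maxⱼ Σᵢ aᵢⱼ`. -/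
theorem stmt9 (m n : ℕ) (hn : 0 < n) (A : Matrix (Fin m) (Fin n) ℝ)
    (hA : ∀ i j, 0 ≤ A i j) (hrows : ∀ i, A i ≠ 0)
    (b : Fin m → ℝ) (hb : ∀ i, 0 < b i)
    (L : ℝ)
    (hLdef : L = Finset.univ.sup'
      ⟨(⟨0, hn⟩ : Fin n), Finset.mem_univ _⟩ (fun j => ∑ i, A i j)) :
    ConvexOn ℝ {x : Fin n → ℝ | ∀ j, 0 < x j}
      (fun x => L * (∑ j, x j * Real.log (x j)) -
        ∑ i, ((∑ j, A i j * x j) * Real.log ((∑ j, A i j * x j) / b i)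
          - (∑ j, A i j * x j) + b i)) :=
  stmt9_general m n hn A hA b hb L hLdef
end

section
/- For nonnegative linear regression with the Boltzmann–Shannon entropy, the Bregman gradient step has closed form: for x with strictly positive coordinates, [p_γ(x)]_j = x_j · ∏_{i=1}^m (⟨a_i, x⟩ / b_i)^{−γ a_{ij}}, and p_γ(x) again has strictly positive coordinates. -/
/-!
Writing `sⱼ = exp (-(1 + cⱼ))`, the objective `∑ⱼ yⱼ log yⱼ + ∑ⱼ yⱼ cⱼ` equals
`∑ⱼ sⱼ · klFun (yⱼ / sⱼ) - ∑ⱼ sⱼ`. Since `klFun ≥ 0` on `[0, ∞)` and vanishes only at `1`,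
the unique minimiser over the nonnegative orthant is `y = s`. The Bregman step is the case
`cⱼ = γ ∑ᵢ aᵢⱼ log (⟨aᵢ, x⟩ / bᵢ) - (1 + log xⱼ)`, for which `exp (-(1 + cⱼ))` is
`xⱼ ∏ᵢ (⟨aᵢ, x⟩ / bᵢ) ^ (-γ aᵢⱼ)` as soon as every `⟨aᵢ, x⟩` is positive.
-/

open Real InformationTheory Finset

lemma mul_klFun_div {s : ℝ} (hs : 0 < s) (t : ℝ) :
    s * klFun (t / s) = t * log t - t * log s - t + s := by
  rcases eq_or_ne t 0 with rfl | ht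
  · simp [klFun_zero]
  · rw [klFun_apply, log_div ht hs.ne']
    field_simp
    ring

lemma entropy_add_linear_eq_sum_klFun {ι : Type*} [Fintype ι] (c y : ι → ℝ) :
    (∑ j, y j * log (y j)) + ∑ j, y j * c j =
      (∑ j, exp (-(1 + c j)) * klFun (y j / exp (-(1 + c j)))) - ∑ j, exp (-(1 + c j)) := by
  rw [← sum_add_distrib, ← sum_sub_distrib]
  refine sum_congr rfl fun j _ => ?_
  rw [mul_klFun_div (exp_pos _), log_exp]
  ring

lemma eq_exp_of_isMinOn_entropy_add_linear {ι : Type*} [Fintype ι] (c p : ι → ℝ)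
    (hp : ∀ j, 0 ≤ p j)
    (hmin : IsMinOn (fun y : ι → ℝ => (∑ j, y j * log (y j)) + ∑ j, y j * c j)
      {y | ∀ j, 0 ≤ y j} p) :
    p = fun j => exp (-(1 + c j)) := by
  set s : ι → ℝ := fun j => exp (-(1 + c j))
  have hs : ∀ j, 0 < s j := fun j => exp_pos _
  have hterm : ∀ j, 0 ≤ s j * klFun (p j / s j) :=
    fun j => mul_nonneg (hs j).le (klFun_nonneg (div_nonneg (hp j) (hs j).le))
  have hsum : ∑ j, s j * klFun (p j / s j) ≤ 0 := by
    have := hmin (a := s) fun j => (hs j).le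
    simp only [Set.mem_ofPred_eq, entropy_add_linear_eq_sum_klFun] at this
    simpa [s, (hs _).ne', klFun_one] using this
  have hzero := (sum_eq_zero_iff_of_nonneg fun j _ => hterm j).mp
    (le_antisymm hsum (sum_nonneg fun j _ => hterm j))
  funext j
  have hkl : klFun (p j / s j) = 0 :=
    (mul_eq_zero.mp (hzero j (mem_univ j))).resolve_left (hs j).ne'
  have := (klFun_eq_zero_iff (div_nonneg (hp j) (hs j).le)).mp hkl
  exact (div_eq_one_iff_eq (hs j).ne').mp this

lemma Real.prod_rpow_eq_exp_sum {ι : Type*} (s : Finset ι) {r : ι → ℝ} (hr : ∀ i ∈ s, 0 < r i)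
    (e : ι → ℝ) : ∏ i ∈ s, r i ^ e i = exp (∑ i ∈ s, log (r i) * e i) := by
  rw [exp_sum]
  exact prod_congr rfl fun i hi => rpow_def_of_pos (hr i hi) _

lemma sum_mul_pos_of_nonneg_of_ne_zero {ι : Type*} [Fintype ι] {a x : ι → ℝ}
    (ha : ∀ j, 0 ≤ a j) (ha0 : a ≠ 0) (hx : ∀ j, 0 < x j) : 0 < ∑ j, a j * x j := by
  obtain ⟨j, hj⟩ := Function.ne_iff.mp ha0
  exact sum_pos' (fun j _ => mul_nonneg (ha j) (hx j).le)
    ⟨j, mem_univ j, mul_pos ((ha j).lt_of_ne (Ne.symm hj)) (hx j)⟩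

theorem stmt10_general (m n : ℕ) (A : Matrix (Fin m) (Fin n) ℝ)
    (hA : ∀ i j, 0 ≤ A i j) (hrows : ∀ i, A i ≠ 0)
    (b : Fin m → ℝ) (hb : ∀ i, 0 < b i)
    (γ : ℝ)
    (x : Fin n → ℝ) (hx : ∀ j, 0 < x j)
    (p : Fin n → ℝ) (hpmem : ∀ j, 0 ≤ p j)
    (hpmin : IsMinOn
      (fun y : Fin n → ℝ => (∑ j, y j * Real.log (y j)) +
        ∑ j, y j * (γ * (∑ i, A i j * Real.log ((∑ j', A i j' * x j') / b i))
          - (1 + Real.log (x j))))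
      {y : Fin n → ℝ | ∀ j, 0 ≤ y j} p) :
    (∀ j, 0 < p j) ∧
    (∀ j, p j = x j * ∏ i, ((∑ j', A i j' * x j') / b i) ^ (-(γ * A i j))) := by
  set r : Fin m → ℝ := fun i => (∑ j', A i j' * x j') / b i
  have hr : ∀ i ∈ univ, 0 < r i := fun i _ =>
    div_pos (sum_mul_pos_of_nonneg_of_ne_zero (hA i) (hrows i) hx) (hb i)
  have hp := eq_exp_of_isMinOn_entropy_add_linear _ p hpmem hpmin
  refine ⟨fun j => hp ▸ exp_pos _, fun j => ?_⟩
  have hexponent : ∑ i, log (r i) * (-(γ * A i j)) = -(γ * ∑ i, A i j * log (r i)) := by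
    rw [mul_sum, ← sum_neg_distrib]
    exact sum_congr rfl fun i _ => by ring
  calc p j = exp (log (x j) + ∑ i, log (r i) * (-(γ * A i j))) := by
        rw [congrFun hp j, hexponent]
        congr 1
        ring
    _ = x j * ∏ i, r i ^ (-(γ * A i j)) := by
        rw [exp_add, exp_log (hx j), Real.prod_rpow_eq_exp_sum _ hr]

/-- Closed form of the Bregman gradient step for nonnegative linear regression with the
Boltzmann–Shannon entropy: `[p_γ(x)]ⱼ = xⱼ · ∏ᵢ (⟨aᵢ,x⟩/bᵢ)^{−γ aᵢⱼ}`, which has strictly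
positive coordinates. -/
theorem stmt10 (m n : ℕ) (A : Matrix (Fin m) (Fin n) ℝ)
    (hA : ∀ i j, 0 ≤ A i j) (hrows : ∀ i, A i ≠ 0)
    (b : Fin m → ℝ) (hb : ∀ i, 0 < b i)
    (γ : ℝ) (hγ : 0 < γ)
    (x : Fin n → ℝ) (hx : ∀ j, 0 < x j)
    (p : Fin n → ℝ) (hpmem : ∀ j, 0 ≤ p j)
    (hpmin : IsMinOn
      (fun y : Fin n → ℝ => (∑ j, y j * Real.log (y j)) +
        ∑ j, y j * (γ * (∑ i, A i j * Real.log ((∑ j', A i j' * x j') / b i))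
          - (1 + Real.log (x j))))
      {y : Fin n → ℝ | ∀ j, 0 ≤ y j} p) :
    (∀ j, 0 < p j) ∧
    (∀ j, p j = x j * ∏ i, ((∑ j', A i j' * x j') / b i) ^ (-(γ * A i j))) :=
  stmt10_general m n A hA hrows b hb γ x hx p hpmem hpmin
end

section
/- If A ∈ ℝ₊^{m×n} is full-rank (ker A = {0}) with nonzero rows and b ∈ ℝ₊₊^m, then f(x) = KL(Ax, b) admits a unique minimizer over ℝ₊ⁿ. -/
/-!
Writing `KL(v, b) = ∑ bᵢ klFun (vᵢ / bᵢ)` with `klFun x = x log x + 1 - x`, the objective is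
`x ↦ KL(Ax, b)`. It is continuous, and coercive on the orthant because `KL(v, b) ≥ ‖v‖ - C` for
`v ≥ 0`, while the injective map `A` is proper; so a minimizer exists. It is unique because
`KL(·, b)` is strictly convex on the orthant and stays so after composing with the injective `A`.
-/

open Real Set Filter Topology InformationTheory Matrix

theorem StrictConvexOn.comp_linearMap_of_injective {𝕜 E F β : Type*} [Semiring 𝕜]
    [PartialOrder 𝕜] [AddCommMonoid E] [AddCommMonoid F] [AddCommMonoid β] [PartialOrder β]
    [Module 𝕜 E] [Module 𝕜 F] [SMul 𝕜 β] {f : F → β} {s : Set F}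
    (hf : StrictConvexOn 𝕜 s f) (g : E →ₗ[𝕜] F) (hg : Function.Injective g) :
    StrictConvexOn 𝕜 (g ⁻¹' s) (f ∘ g) :=
  ⟨hf.1.linear_preimage g, fun _ hx _ hy hxy _ _ ha hb hab => by
    simpa only [Function.comp_apply, map_add, map_smul] using hf.2 hx hy (hg.ne hxy) ha hb hab⟩

theorem strictConvexOn_pi_sum {𝕜 E β ι : Type*} [Fintype ι] [Field 𝕜] [LinearOrder 𝕜]
    [IsStrictOrderedRing 𝕜] [AddCommGroup E] [Module 𝕜 E] [AddCommMonoid β] [PartialOrder β]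
    [IsOrderedCancelAddMonoid β] [Module 𝕜 β] {s : ι → Set E} {φ : ι → E → β}
    (hφ : ∀ i, StrictConvexOn 𝕜 (s i) (φ i)) :
    StrictConvexOn 𝕜 (univ.pi s) fun v => ∑ i, φ i (v i) := by
  refine ⟨convex_pi fun i _ => (hφ i).1, fun x hx y hy hxy a b ha hb hab => ?_⟩
  obtain ⟨i, hi⟩ := Function.ne_iff.1 hxy
  simp only [Pi.add_apply, Pi.smul_apply, Finset.smul_sum, ← Finset.sum_add_distrib]
  exact Finset.sum_lt_sum
    (fun j _ => (hφ j).convexOn.2 (hx j trivial) (hy j trivial) ha.le hb.le hab)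
    ⟨i, Finset.mem_univ i, (hφ i).2 (hx i trivial) (hy i trivial) hi ha hb hab⟩

lemma Matrix.mulVec_nonneg_of_nonneg {R ι κ : Type*} [Fintype κ] [Semiring R] [PartialOrder R]
    [IsOrderedRing R] {A : Matrix ι κ R} (hA : ∀ i j, 0 ≤ A i j) {x : κ → R} (hx : 0 ≤ x) :
    0 ≤ A *ᵥ x :=
  fun i => Finset.sum_nonneg fun j _ => mul_nonneg (hA i j) (hx j)

lemma mul_log_div_sub_add_eq_mul_klFun (t : ℝ) {b : ℝ} (hb : b ≠ 0) :
    t * log (t / b) - t + b = b * klFun (t / b) := by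
  rw [klFun_apply]; field_simp; ring

lemma strictConvexOn_mul_klFun_div {b : ℝ} (hb : 0 < b) :
    StrictConvexOn ℝ (Ici 0) fun t => b * klFun (t / b) := by
  refine ⟨convex_Ici 0, fun x hx y hy hxy p q hp hq hpq => ?_⟩
  have key := strictConvexOn_klFun.2 (div_nonneg hx hb.le : 0 ≤ x / b)
    (div_nonneg hy hb.le : 0 ≤ y / b) (by simpa [hb.ne'] using hxy) hp hq hpq
  simp only [smul_eq_mul] at key ⊢
  calc b * klFun ((p * x + q * y) / b) = b * klFun (p * (x / b) + q * (y / b)) := by ring_nf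
    _ < b * (p * klFun (x / b) + q * klFun (y / b)) := mul_lt_mul_of_pos_left key hb
    _ = p * (b * klFun (x / b)) + q * (b * klFun (y / b)) := by ring

/-- The right-hand side is the tangent line of `klFun` at `e`. -/
lemma sub_le_klFun {t : ℝ} (ht : 0 ≤ t) : t - (exp 1 - 1) ≤ klFun t := by
  rcases ht.eq_or_lt with rfl | ht
  · simpa [klFun_zero] using (exp_pos 1).le
  · have h := log_le_sub_one_of_pos (div_pos (exp_pos 1) ht)
    rw [log_div (exp_pos 1).ne' ht.ne', log_exp, le_sub_iff_add_le, le_div_iff₀ ht] at h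
    rw [klFun_apply]; linarith

lemma norm_le_sum_of_nonneg {ι : Type*} [Fintype ι] {v : ι → ℝ} (hv : 0 ≤ v) :
    ‖v‖ ≤ ∑ i, v i := by
  refine (pi_norm_le_iff_of_nonneg (Finset.sum_nonneg fun i _ => hv i)).2 fun i => ?_
  rw [norm_of_nonneg (hv i)]
  exact Finset.single_le_sum (fun j _ => hv j) (Finset.mem_univ i)

section KLDivVec

variable {ι : Type*} [Fintype ι] {b : ι → ℝ}

/-- `KL(v, b)` of the paper; for `b > 0` its `i`-th term is `vᵢ log (vᵢ / bᵢ) - vᵢ + bᵢ`. -/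
noncomputable def klDivVec (v b : ι → ℝ) : ℝ := ∑ i, b i * klFun (v i / b i)

lemma continuous_klDivVec (b : ι → ℝ) : Continuous fun v => klDivVec v b := by
  unfold klDivVec; fun_prop

lemma strictConvexOn_klDivVec (hb : ∀ i, 0 < b i) :
    StrictConvexOn ℝ (Ici 0) fun v => klDivVec v b := by
  rw [← pi_univ_Ici]
  exact strictConvexOn_pi_sum fun i => strictConvexOn_mul_klFun_div (hb i)

lemma norm_sub_le_klDivVec (hb : ∀ i, 0 < b i) {v : ι → ℝ} (hv : 0 ≤ v) :
    ‖v‖ - (exp 1 - 1) * ∑ i, b i ≤ klDivVec v b := by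
  have hterm (i : ι) : v i - (exp 1 - 1) * b i ≤ b i * klFun (v i / b i) := by
    have := mul_le_mul_of_nonneg_left (sub_le_klFun (div_nonneg (hv i) (hb i).le)) (hb i).le
    rwa [mul_sub, mul_div_cancel₀ _ (hb i).ne', mul_comm (b i)] at this
  calc ‖v‖ - (exp 1 - 1) * ∑ i, b i ≤ ∑ i, (v i - (exp 1 - 1) * b i) := by
        rw [Finset.sum_sub_distrib, ← Finset.mul_sum]; linarith [norm_le_sum_of_nonneg hv]
    _ ≤ klDivVec v b := Finset.sum_le_sum fun i _ => hterm i

lemma tendsto_klDivVec_cocompact (hb : ∀ i, 0 < b i) :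
    Tendsto (fun v => klDivVec v b) (cocompact (ι → ℝ) ⊓ 𝓟 (Ici 0)) atTop := by
  refine tendsto_atTop_mono' _ (f₁ := fun v => ‖v‖ - (exp 1 - 1) * ∑ i, b i)
    (mem_inf_of_right (mem_principal.2 fun v hv => norm_sub_le_klDivVec hb hv)) ?_
  simpa only [sub_eq_add_neg] using tendsto_atTop_add_const_right _ _
    (tendsto_norm_cocompact_atTop.mono_left inf_le_left)

end KLDivVec

theorem stmt11_general (m n : ℕ) (A : Matrix (Fin m) (Fin n) ℝ)
    (hA : ∀ i j, 0 ≤ A i j)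
    (hker : ∀ x : Fin n → ℝ, A.mulVec x = 0 → x = 0)
    (b : Fin m → ℝ) (hb : ∀ i, 0 < b i) :
    ∃ xstar : Fin n → ℝ, (∀ j, 0 ≤ xstar j) ∧
      IsMinOn (fun x : Fin n → ℝ =>
          ∑ i, ((∑ j, A i j * x j) * Real.log ((∑ j, A i j * x j) / b i)
            - (∑ j, A i j * x j) + b i))
        {x : Fin n → ℝ | ∀ j, 0 ≤ x j} xstar ∧
      ∀ y : Fin n → ℝ, (∀ j, 0 ≤ y j) →
        IsMinOn (fun x : Fin n → ℝ =>
            ∑ i, ((∑ j, A i j * x j) * Real.log ((∑ j, A i j * x j) / b i)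
              - (∑ j, A i j * x j) + b i))
          {x : Fin n → ℝ | ∀ j, 0 ≤ x j} y → y = xstar := by
  have hf : (fun x : Fin n → ℝ => ∑ i, ((∑ j, A i j * x j) * Real.log ((∑ j, A i j * x j) / b i)
      - (∑ j, A i j * x j) + b i)) = fun x => klDivVec (A *ᵥ x) b :=
    funext fun x => Finset.sum_congr rfl fun i _ => mul_log_div_sub_add_eq_mul_klFun _ (hb i).ne'
  rw [hf]
  have hker' : LinearMap.ker A.mulVecLin = ⊥ := LinearMap.ker_eq_bot'.2 hker
  have hmaps : MapsTo (A *ᵥ ·) (Ici 0) (Ici 0) := fun _ hx => mulVec_nonneg_of_nonneg hA hx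
  have hcoercive : Tendsto (fun x => klDivVec (A *ᵥ x) b) (cocompact _ ⊓ 𝓟 (Ici 0)) atTop :=
    (tendsto_klDivVec_cocompact hb).comp <|
      (LinearMap.isClosedEmbedding_of_injective hker').tendsto_cocompact.inf
        (tendsto_principal_principal.2 hmaps)
  have hcont : Continuous fun x => klDivVec (A *ᵥ x) b :=
    (continuous_klDivVec b).comp A.mulVecLin.continuous_of_finiteDimensional
  obtain ⟨xstar, hxstar, hmin⟩ := hcont.continuousOn.exists_isMinOn' isClosed_Ici self_mem_Ici
    (hcoercive.eventually_ge_atTop _)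
  have hconvex : StrictConvexOn ℝ (Ici 0) fun x => klDivVec (A *ᵥ x) b :=
    ((strictConvexOn_klDivVec hb).comp_linearMap_of_injective A.mulVecLin
      (LinearMap.ker_eq_bot.1 hker')).subset hmaps (convex_Ici 0)
  exact ⟨xstar, hxstar, hmin, fun y hy hminy => hconvex.eq_of_isMinOn hminy hmin hy hxstar⟩

/-- If `A` is injective with nonnegative entries and nonzero rows and `b > 0`, then
`f(x) = KL(Ax, b)` has a unique minimizer over the nonnegative orthant. -/
theorem stmt11 (m n : ℕ) (A : Matrix (Fin m) (Fin n) ℝ)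
    (hA : ∀ i j, 0 ≤ A i j) (hrows : ∀ i, A i ≠ 0)
    (hker : ∀ x : Fin n → ℝ, A.mulVec x = 0 → x = 0)
    (b : Fin m → ℝ) (hb : ∀ i, 0 < b i) :
    ∃ xstar : Fin n → ℝ, (∀ j, 0 ≤ xstar j) ∧
      IsMinOn (fun x : Fin n → ℝ =>
          ∑ i, ((∑ j, A i j * x j) * Real.log ((∑ j, A i j * x j) / b i)
            - (∑ j, A i j * x j) + b i))
        {x : Fin n → ℝ | ∀ j, 0 ≤ x j} xstar ∧
      ∀ y : Fin n → ℝ, (∀ j, 0 ≤ y j) →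
        IsMinOn (fun x : Fin n → ℝ =>
            ∑ i, ((∑ j, A i j * x j) * Real.log ((∑ j, A i j * x j) / b i)
              - (∑ j, A i j * x j) + b i))
          {x : Fin n → ℝ | ∀ j, 0 ≤ x j} y → y = xstar :=
  stmt11_general m n A hA hker b hb
end

section
/- The function f(x) = KL(Ax, b) with A having nonnegative entries, nonzero rows, and b strictly positive, is coercive on ℝ₊ⁿ (f(x) → +∞ as ‖x‖ → +∞ within ℝ₊ⁿ), provided ker A ∩ ℝ₊ⁿ = {0}. -/
/-!
On the nonnegative orthant the total mass `∑ᵢ (Ax)ᵢ` vanishes only at `0`, so by compactness of the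
unit sphere it grows at least like `δ ‖x‖`. Each Kullback–Leibler term is bounded below by the
affine function `s - (e - 1) c` of its first argument, hence `f x ≥ δ ‖x‖ - (e - 1) ∑ᵢ bᵢ`.
-/

open Real Finset

noncomputable def klDiv (s c : ℝ) : ℝ := s * log (s / c) - s + c

/- The bound is `log y ≥ 1 - 1 / y` at `y = s / (e c)`; it is attained at `s = e c`. -/
theorem sub_le_klDiv {s c : ℝ} (hs : 0 ≤ s) (hc : 0 < c) : s - (exp 1 - 1) * c ≤ klDiv s c := by
  rcases hs.eq_or_lt with rfl | hs
  · simp only [klDiv]; nlinarith [add_one_le_exp (1 : ℝ)]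
  have hlog : 1 - exp 1 * c / s ≤ log (s / c) - 1 := by
    have := one_sub_inv_le_log_of_pos (by positivity : 0 < s / (exp 1 * c))
    rw [inv_div, log_div hs.ne' (by positivity), log_mul (exp_pos 1).ne' hc.ne', log_exp] at this
    rw [log_div hs.ne' hc.ne']
    linarith
  have := mul_le_mul_of_nonneg_left hlog hs.le
  rw [mul_sub, mul_one, mul_div_cancel₀ _ hs.ne'] at this
  simp only [klDiv]
  linarith

theorem exists_pos_mul_norm_le_of_isClosed_cone {E : Type*} [NormedAddCommGroup E]
    [NormedSpace ℝ E] [ProperSpace E] {K : Set E} (hK : IsClosed K)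
    (hsmul : ∀ t : ℝ, 0 < t → ∀ x ∈ K, t • x ∈ K) {L : E → ℝ} (hL : Continuous L)
    (hhom : ∀ t : ℝ, 0 < t → ∀ x, L (t • x) = t * L x) (hpos : ∀ x ∈ K, x ≠ 0 → 0 < L x) :
    ∃ δ > 0, ∀ x ∈ K, δ * ‖x‖ ≤ L x := by
  have hL0 : L 0 = 0 := by
    have := hhom 2 two_pos 0
    rw [smul_zero] at this
    linarith
  have hnormalize : ∀ x ∈ K, x ≠ 0 → ‖x‖⁻¹ • x ∈ K ∩ Metric.sphere 0 1 := fun x hx hx0 =>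
    ⟨hsmul _ (by positivity) x hx, by simp [norm_smul, hx0]⟩
  rcases (K ∩ Metric.sphere 0 1).eq_empty_or_nonempty with hempty | hne
  · refine ⟨1, one_pos, fun x hx => ?_⟩
    obtain rfl : x = 0 := by
      by_contra hx0
      simpa [hempty] using hnormalize x hx hx0
    simp [hL0]
  obtain ⟨x₀, ⟨hx₀K, hx₀norm⟩, hmin⟩ :=
    ((isCompact_sphere 0 1).inter_left hK).exists_isMinOn hne hL.continuousOn
  refine ⟨L x₀, hpos x₀ hx₀K (ne_zero_of_mem_unit_sphere ⟨x₀, hx₀norm⟩), fun x hx => ?_⟩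
  rcases eq_or_ne x 0 with rfl | hx0
  · simp [hL0]
  have hxpos : 0 < ‖x‖ := norm_pos_iff.mpr hx0
  have hle := isMinOn_iff.mp hmin _ (hnormalize x hx hx0)
  rw [hhom _ (by positivity)] at hle
  rwa [← le_inv_mul_iff₀' hxpos]

theorem exists_pos_mul_norm_le_sum_mulVec {m n : ℕ} {A : Matrix (Fin m) (Fin n) ℝ}
    (hA : ∀ i j, 0 ≤ A i j)
    (hker : ∀ x : EuclideanSpace ℝ (Fin n), (∀ j, 0 ≤ x j) → A.mulVec x = 0 → x = 0) :
    ∃ δ > 0, ∀ x : EuclideanSpace ℝ (Fin n), (∀ j, 0 ≤ x j) →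
      δ * ‖x‖ ≤ ∑ i, ∑ j, A i j * x j := by
  refine exists_pos_mul_norm_le_of_isClosed_cone
    (K := {x : EuclideanSpace ℝ (Fin n) | ∀ j, 0 ≤ x j}) ?_ ?_ (by fun_prop) ?_ ?_
  · simp only [Set.ofPred_forall]
    exact isClosed_iInter fun j => isClosed_le continuous_const (by fun_prop)
  · intro t ht x hx j
    simpa using mul_nonneg ht.le (hx j)
  · intro t ht x
    simp [mul_sum, mul_left_comm]
  · intro x hx hx0
    have hrow : ∀ i, 0 ≤ ∑ j, A i j * x j := fun i =>
      sum_nonneg fun j _ => mul_nonneg (hA i j) (hx j)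
    refine (sum_nonneg fun i _ => hrow i).lt_of_ne fun hzero => hx0 (hker x hx ?_)
    ext i
    exact (sum_eq_zero_iff_of_nonneg fun i _ => hrow i).mp hzero.symm i (mem_univ i)

theorem stmt12_general (m n : ℕ) (A : Matrix (Fin m) (Fin n) ℝ)
    (hA : ∀ i j, 0 ≤ A i j)
    (hker : ∀ x : EuclideanSpace ℝ (Fin n), (∀ j, 0 ≤ x j) →
      A.mulVec x = 0 → x = 0)
    (b : Fin m → ℝ) (hb : ∀ i, 0 < b i) :
    ∀ C : ℝ, ∃ R : ℝ, ∀ x : EuclideanSpace ℝ (Fin n), (∀ j, 0 ≤ x j) → R ≤ ‖x‖ →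
      C ≤ ∑ i, ((∑ j, A i j * x j) * Real.log ((∑ j, A i j * x j) / b i)
        - (∑ j, A i j * x j) + b i) := by
  intro C
  obtain ⟨δ, hδ, hgrowth⟩ := exists_pos_mul_norm_le_sum_mulVec hA hker
  refine ⟨(C + (exp 1 - 1) * ∑ i, b i) / δ, fun x hx hR => ?_⟩
  rw [div_le_iff₀' hδ] at hR
  calc C ≤ ∑ i, (∑ j, A i j * x j) - ∑ i, (exp 1 - 1) * b i := by
        linarith [hgrowth x hx, mul_sum univ b (exp 1 - 1)]
    _ = ∑ i, ((∑ j, A i j * x j) - (exp 1 - 1) * b i) := (sum_sub_distrib ..).symm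
    _ ≤ ∑ i, klDiv (∑ j, A i j * x j) (b i) :=
        sum_le_sum fun i _ =>
          sub_le_klDiv (sum_nonneg fun j _ => mul_nonneg (hA i j) (hx j)) (hb i)

/-- Coercivity of `f(x) = KL(Ax, b)` on the nonnegative orthant when
`ker A ∩ ℝ₊ⁿ = {0}`. -/
theorem stmt12 (m n : ℕ) (A : Matrix (Fin m) (Fin n) ℝ)
    (hA : ∀ i j, 0 ≤ A i j) (hrows : ∀ i, A i ≠ 0)
    (hker : ∀ x : EuclideanSpace ℝ (Fin n), (∀ j, 0 ≤ x j) →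
      A.mulVec x = 0 → x = 0)
    (b : Fin m → ℝ) (hb : ∀ i, 0 < b i) :
    ∀ C : ℝ, ∃ R : ℝ, ∀ x : EuclideanSpace ℝ (Fin n), (∀ j, 0 ≤ x j) → R ≤ ‖x‖ →
      C ≤ ∑ i, ((∑ j, A i j * x j) * Real.log ((∑ j, A i j * x j) / b i)
        - (∑ j, A i j * x j) + b i) :=
  stmt12_general m n A hA hker b hb
end

section
/- For the Boltzmann–Shannon entropy h(x) = Σⱼ xⱼ log xⱼ on ℝ₊ⁿ, for every x ∈ ℝ₊ⁿ and t ∈ ℝ, the sublevel set {y ∈ int ℝ₊ⁿ : D_h(x, y) ≤ t} is bounded, and a sequence (x^k) in int ℝ₊ⁿ converges to x ∈ ℝ₊ⁿ if and only if D_h(x, x^k) → 0. -/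
/-!
Every coordinate term `x log (x / y) - x + y` of the divergence dominates the squared Hellinger
distance `(√y - √x)²`, by `log u ≥ 1 - 1/u` applied at `u = √x / √y`. The terms are nonnegative,
so a bound on the sum bounds each `√y j`, and the sum tends to `0` iff each term does, which
forces `√(xk k j) → √(x j)`. Conversely each term is continuous in `y` at `y = x`, where it
vanishes.
-/

open Filter Topology Real

noncomputable def klTerm (x y : ℝ) : ℝ := x * log (x / y) - x + y

section klTerm

variable {x y t : ℝ}

theorem sq_sqrt_sub_sqrt_le_klTerm (hx : 0 ≤ x) (hy : 0 < y) :
    (√y - √x) ^ 2 ≤ klTerm x y := by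
  rcases hx.eq_or_lt with rfl | hx
  · simp [klTerm, sq_sqrt hy.le]
  have hsx : 0 < √x := sqrt_pos.2 hx
  have hsy : 0 < √y := sqrt_pos.2 hy
  have hlog : 2 * (1 - √y / √x) ≤ log (x / y) := by
    have h := one_sub_inv_le_log_of_pos (div_pos hsx hsy)
    rw [inv_div] at h
    have hsplit : log (x / y) = 2 * log (√x / √y) := by
      rw [log_div hx.ne' hy.ne', log_div hsx.ne' hsy.ne', log_sqrt hx.le, log_sqrt hy.le]
      ring
    linarith
  have hmul : x * (2 * (1 - √y / √x)) = 2 * x - 2 * (√x * √y) := by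
    field_simp
    linear_combination √y * sq_sqrt hx.le
  calc (√y - √x) ^ 2 = x * (2 * (1 - √y / √x)) - x + y := by
        rw [hmul]; linear_combination sq_sqrt hy.le + sq_sqrt hx.le
    _ ≤ klTerm x y := by unfold klTerm; gcongr

theorem klTerm_nonneg (hx : 0 ≤ x) (hy : 0 < y) : 0 ≤ klTerm x y :=
  (sq_nonneg _).trans (sq_sqrt_sub_sqrt_le_klTerm hx hy)

theorem tendsto_klTerm_self (hx : 0 ≤ x) : Tendsto (klTerm x) (𝓝 x) (𝓝 0) := by
  rcases hx.eq_or_lt with rfl | hx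
  · have hid : klTerm 0 = id := funext fun y => by simp [klTerm]
    exact hid ▸ tendsto_id
  have hcont : ContinuousAt (klTerm x) x := by
    unfold klTerm
    fun_prop (disch := positivity)
  simpa [klTerm, hx.ne'] using hcont.tendsto

theorem le_sq_sqrt_add_sqrt_of_klTerm_le (hx : 0 ≤ x) (hy : 0 < y) (h : klTerm x y ≤ t) :
    y ≤ (√x + √t) ^ 2 := by
  have hdiff : √y - √x ≤ √t :=
    le_sqrt_of_sq_le ((sq_sqrt_sub_sqrt_le_klTerm hx hy).trans h)
  calc y = √y ^ 2 := (sq_sqrt hy.le).symm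
    _ ≤ (√x + √t) ^ 2 := by gcongr; linarith

theorem tendsto_of_tendsto_klTerm_zero {α : Type*} {l : Filter α} {y : α → ℝ} (hx : 0 ≤ x)
    (hy : ∀ a, 0 < y a) (h : Tendsto (fun a => klTerm x (y a)) l (𝓝 0)) :
    Tendsto y l (𝓝 x) := by
  have hsqrt : Tendsto (fun a => √(y a)) l (𝓝 √x) := by
    rw [tendsto_iff_dist_tendsto_zero]
    refine squeeze_zero (fun _ => dist_nonneg) (fun a => ?_) (by simpa using h.sqrt)
    rw [dist_eq, ← sqrt_sq_eq_abs]
    exact sqrt_le_sqrt (sq_sqrt_sub_sqrt_le_klTerm hx (hy a))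
  simpa [sq_sqrt hx, sq_sqrt (hy _).le] using hsqrt.pow 2

end klTerm

theorem Finset.tendsto_sum_nhds_zero_iff_of_nonneg {ι α : Type*} {l : Filter α} {s : Finset ι}
    {f : ι → α → ℝ} (hf : ∀ i ∈ s, ∀ a, 0 ≤ f i a) :
    Tendsto (fun a => ∑ i ∈ s, f i a) l (𝓝 0) ↔ ∀ i ∈ s, Tendsto (f i) l (𝓝 0) := by
  refine ⟨fun h i hi => ?_, fun h => by simpa using tendsto_finsetSum s h⟩
  exact squeeze_zero (hf i hi) (fun a => single_le_sum (fun j hj => hf j hj a) hi) h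

theorem PiLp.tendsto_nhds_iff {p : ENNReal} {ι α : Type*} {β : ι → Type*}
    [∀ i, TopologicalSpace (β i)] {l : Filter α} {f : α → PiLp p β} {x : PiLp p β} :
    Tendsto f l (𝓝 x) ↔ ∀ i, Tendsto (fun a => f a i) l (𝓝 (x i)) :=
  (PiLp.homeomorph p β).isInducing.tendsto_nhds_iff.trans tendsto_pi_nhds

theorem PiLp.isBounded_of_mem_Icc {p : ENNReal} {ι : Type*} [Fintype ι]
    {s : Set (PiLp p fun _ : ι => ℝ)} (a b : ι → ℝ) (h : ∀ y ∈ s, ∀ i, y i ∈ Set.Icc (a i) (b i)) :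
    Bornology.IsBounded s := by
  refine Bornology.isBounded_induced.2 ((Metric.isBounded_Icc a b).subset ?_)
  rintro _ ⟨y, hy, rfl⟩
  exact ⟨fun i => (h y hy i).1, fun i => (h y hy i).2⟩

/-- For the Boltzmann–Shannon entropy, the Bregman (generalized KL) divergence has bounded
sublevel sets in its second argument, and convergence of a sequence of the interior of the
orthant to a point of the orthant is equivalent to convergence of the divergence to `0`. -/
theorem stmt13 (n : ℕ) :
    (∀ x : EuclideanSpace ℝ (Fin n), (∀ j, 0 ≤ x j) → ∀ t : ℝ,
      Bornology.IsBounded {y : EuclideanSpace ℝ (Fin n) | (∀ j, 0 < y j) ∧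
        (∑ j, (x j * Real.log (x j / y j) - x j + y j)) ≤ t}) ∧
    (∀ (xk : ℕ → EuclideanSpace ℝ (Fin n)) (x : EuclideanSpace ℝ (Fin n)),
      (∀ k j, 0 < xk k j) → (∀ j, 0 ≤ x j) →
      (Tendsto xk atTop (nhds x) ↔
        Tendsto (fun k => ∑ j, (x j * Real.log (x j / xk k j) - x j + xk k j))
          atTop (nhds 0))) := by
  constructor
  · intro x hx t
    refine PiLp.isBounded_of_mem_Icc 0 (fun j => (√(x j) + √t) ^ 2) fun y ⟨hy, hsum⟩ j => ?_
    have hterm : klTerm (x j) (y j) ≤ t :=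
      (Finset.single_le_sum (fun i _ => klTerm_nonneg (hx i) (hy i)) (Finset.mem_univ j)).trans
        hsum
    exact ⟨(hy j).le, le_sq_sqrt_add_sqrt_of_klTerm_le (hx j) (hy j) hterm⟩
  · intro xk x hxk hx
    change _ ↔ Tendsto (fun k => ∑ j, klTerm (x j) (xk k j)) atTop (𝓝 0)
    rw [PiLp.tendsto_nhds_iff,
      Finset.tendsto_sum_nhds_zero_iff_of_nonneg fun j _ k => klTerm_nonneg (hx j) (hxk k j)]
    exact ⟨fun h j _ => (tendsto_klTerm_self (hx j)).comp (h j),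
      fun h j => tendsto_of_tendsto_klTerm_zero (hx j) (hxk · j) (h j (Finset.mem_univ j))⟩
end

section
/- Let T_γ(y) = argmin_{x∈X}{ γg(x) + h(x) + ⟨x, (1/M)Σᵢ(γ∇fᵢ(yᵢ) − ∇h(yᵢ))⟩ }. Then for every γ > 0, y ∈ (int dom h)^M, and u ∈ X: D_h(u, T_γ(y)) ≤ (1/M)Σᵢ D_h(u, yᵢ) − ((1 − γL)/M)Σᵢ D_h(T_γ(y), yᵢ) − γ(F(T_γ(y)) − F(u)), where F = (1/M)Σᵢ fᵢ + g. -/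
/-!
Averaging the three-point identity
`D_h(u,p) = D_h(u,yᵢ) - D_h(p,yᵢ) + ⟪∇h(yᵢ) - ∇h(p), u - p⟫` over `i` leaves the term
`-⟪∇h(p), u - p⟫`, which the first-order optimality condition of the minimizer `p`
(convex `g` plus differentiable `h`) bounds by `γ (g u - g p)` plus the linear part of the
objective. What remains is `γ ⟪∇fᵢ(yᵢ), u - p⟫ = γ (D_{fᵢ}(p,yᵢ) - D_{fᵢ}(u,yᵢ) + fᵢ u - fᵢ p)`,
and convexity of `fᵢ` (`D_{fᵢ} ≥ 0`) together with relative smoothness (`D_{fᵢ} ≤ L D_h`)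
bounds it by `γ L D_h(p,yᵢ) - γ (fᵢ p - fᵢ u)`.
-/

open scoped RealInnerProductSpace
open Filter

/-- The Bregman divergence `D_h(x,y) = h(x) − h(y) − ⟨∇h(y), x−y⟩`. -/
noncomputable def bregmanDiv {n : ℕ} (h : EuclideanSpace ℝ (Fin n) → ℝ)
    (x y : EuclideanSpace ℝ (Fin n)) : ℝ :=
  h x - h y - ⟪gradient h y, x - y⟫

open Set Topology

section FirstOrder

variable {E : Type*} [NormedAddCommGroup E] [NormedSpace ℝ E]
  {φ ψ : E → ℝ} {φ' : E →L[ℝ] ℝ} {S : Set E} {a u : E}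

theorem HasFDerivAt.apply_le_of_forall_sub_le_mul {d : E} {c : ℝ} (hφ : HasFDerivAt φ φ' a)
    (hc : ∀ t ∈ Ioc (0 : ℝ) 1, φ (a + t • d) - φ a ≤ t * c) : φ' d ≤ c := by
  have hline : HasDerivAt (fun t : ℝ => φ (a + t • d)) (φ' d) 0 := by
    have hcurve : HasDerivAt (fun t : ℝ => a + t • d) d 0 := by
      simpa using ((hasDerivAt_id (0 : ℝ)).smul_const d).const_add a
    exact (by simpa using hφ : HasFDerivAt φ φ' (a + (0 : ℝ) • d)).comp_hasDerivAt 0 hcurve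
  have hslope : Tendsto (slope (fun t : ℝ => φ (a + t • d)) 0) (𝓝[>] 0) (𝓝 (φ' d)) :=
    (hasDerivAt_iff_tendsto_slope.mp hline).mono_left (nhdsWithin_mono _ fun _ ht => ne_of_gt ht)
  refine le_of_tendsto hslope ?_
  filter_upwards [Ioc_mem_nhdsGT zero_lt_one] with t ht
  rw [slope_def_field, div_le_iff₀ (by simpa using ht.1)]
  simpa [mul_comm] using hc t ht

theorem ConvexOn.fderiv_apply_sub_le (hφ : ConvexOn ℝ S φ) (hD : HasFDerivAt φ φ' a)
    (ha : a ∈ S) (hu : u ∈ S) : φ' (u - a) ≤ φ u - φ a := by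
  refine hD.apply_le_of_forall_sub_le_mul fun t ht => ?_
  have hchord := hφ.2 ha hu (sub_nonneg.mpr ht.2) ht.1.le (sub_add_cancel 1 t)
  rw [show a + t • (u - a) = (1 - t) • a + t • u by module]
  simp only [smul_eq_mul] at hchord
  linarith

theorem IsMinOn.sub_le_fderiv_apply_sub (hmin : IsMinOn (fun z => ψ z + φ z) S a)
    (hψ : ConvexOn ℝ S ψ) (hD : HasFDerivAt φ φ' a) (ha : a ∈ S) (hu : u ∈ S) :
    ψ a - ψ u ≤ φ' (u - a) := by
  suffices -φ' (u - a) ≤ ψ u - ψ a by linarith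
  refine hD.neg.apply_le_of_forall_sub_le_mul fun t ht => ?_
  have hchord := hψ.2 ha hu (sub_nonneg.mpr ht.2) ht.1.le (sub_add_cancel 1 t)
  have hle := isMinOn_iff.mp hmin _ (hψ.1 ha hu (sub_nonneg.mpr ht.2) ht.1.le (sub_add_cancel 1 t))
  rw [show a + t • (u - a) = (1 - t) • a + t • u by module]
  simp only [smul_eq_mul] at hchord hle
  simp only [Pi.neg_apply]
  linarith

end FirstOrder

section Bregman

variable {n : ℕ} {S : Set (EuclideanSpace ℝ (Fin n))} {h f : EuclideanSpace ℝ (Fin n) → ℝ}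
  {x y u p : EuclideanSpace ℝ (Fin n)}

theorem inner_gradient_eq_fderiv (h : EuclideanSpace ℝ (Fin n) → ℝ)
    (y v : EuclideanSpace ℝ (Fin n)) :
    ⟪gradient h y, v⟫ = fderiv ℝ h y v :=
  InnerProductSpace.toDual_symm_apply

theorem bregmanDiv_eq_fderiv (h : EuclideanSpace ℝ (Fin n) → ℝ)
    (x y : EuclideanSpace ℝ (Fin n)) :
    bregmanDiv h x y = h x - h y - fderiv ℝ h y (x - y) := by
  rw [bregmanDiv, inner_gradient_eq_fderiv]

theorem ConvexOn.bregmanDiv_nonneg (hh : ConvexOn ℝ S h) (hd : DifferentiableAt ℝ h y)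
    (hx : x ∈ S) (hy : y ∈ S) : 0 ≤ bregmanDiv h x y := by
  rw [bregmanDiv_eq_fderiv]
  linarith [hh.fderiv_apply_sub_le hd.hasFDerivAt hy hx]

theorem bregmanDiv_const_mul_sub (L : ℝ) (hh : DifferentiableAt ℝ h y)
    (hf : DifferentiableAt ℝ f y) :
    bregmanDiv (fun z => L * h z - f z) x y = L * bregmanDiv h x y - bregmanDiv f x y := by
  have hderiv : fderiv ℝ (fun z => L * h z - f z) y = L • fderiv ℝ h y - fderiv ℝ f y :=
    ((hh.hasFDerivAt.const_mul L).sub hf.hasFDerivAt).fderiv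
  simp only [bregmanDiv_eq_fderiv, hderiv, sub_apply, smul_apply, smul_eq_mul]
  ring

-- Convexity of `L h - f` is relative `L`-smoothness of `f` with respect to `h`.
theorem bregmanDiv_le_mul_of_convexOn_sub {L : ℝ} (hrel : ConvexOn ℝ S (fun z => L * h z - f z))
    (hh : DifferentiableAt ℝ h y) (hf : DifferentiableAt ℝ f y) (hx : x ∈ S) (hy : y ∈ S) :
    bregmanDiv f x y ≤ L * bregmanDiv h x y := by
  have := hrel.bregmanDiv_nonneg ((hh.const_mul L).sub hf) hx hy
  rw [bregmanDiv_const_mul_sub L hh hf] at this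
  linarith

theorem bregmanDiv_three_point (h : EuclideanSpace ℝ (Fin n) → ℝ)
    (u p y : EuclideanSpace ℝ (Fin n)) :
    bregmanDiv h u p =
      bregmanDiv h u y - bregmanDiv h p y + ⟪gradient h y - gradient h p, u - p⟫ := by
  simp only [bregmanDiv, inner_sub_left, inner_sub_right]
  ring

theorem bregmanDiv_add_inner_gradient_le {T : Set (EuclideanSpace ℝ (Fin n))} {γ L : ℝ}
    (hγ : 0 ≤ γ) (hf : ConvexOn ℝ S f) (hrel : ConvexOn ℝ T (fun z => L * h z - f z))
    (hh : DifferentiableAt ℝ h y) (hfd : DifferentiableAt ℝ f y)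
    (hu : u ∈ S) (hyS : y ∈ S) (hp : p ∈ T) (hyT : y ∈ T) :
    bregmanDiv h u p + ⟪gradient h p, u - p⟫ ≤
      bregmanDiv h u y - (1 - γ * L) * bregmanDiv h p y - γ * (f p - f u)
        - ⟪u - p, γ • gradient f y - gradient h y⟫ := by
  have hlower := mul_le_mul_of_nonneg_left (hf.bregmanDiv_nonneg hfd hu hyS) hγ
  have hupper := mul_le_mul_of_nonneg_left
    (bregmanDiv_le_mul_of_convexOn_sub hrel hh hfd hp hyT) hγ
  rw [bregmanDiv_three_point h u p y, real_inner_comm _ (u - p)]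
  simp only [bregmanDiv, inner_sub_left, inner_sub_right, real_inner_smul_left] at hlower hupper ⊢
  linarith

end Bregman

theorem stmt16_general (n M : ℕ) (hM : 0 < M)
    (X : Set (EuclideanSpace ℝ (Fin n)))
    (h g : EuclideanSpace ℝ (Fin n) → ℝ)
    (f : Fin M → EuclideanSpace ℝ (Fin n) → ℝ) (L : ℝ)
    (hXconv : Convex ℝ X)
    (hhdiff : DifferentiableOn ℝ h (interior X))
    (hgconv : ConvexOn ℝ Set.univ g)
    (hfconv : ∀ i, ConvexOn ℝ X (f i))
    (hfdiff : ∀ i, DifferentiableOn ℝ (f i) (interior X))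
    (hrel : ∀ i, ConvexOn ℝ (interior X) (fun z => L * h z - f i z))
    (γ : ℝ) (hγ : 0 < γ)
    (y : Fin M → EuclideanSpace ℝ (Fin n)) (hy : ∀ i, y i ∈ interior X)
    (p : EuclideanSpace ℝ (Fin n)) (hp : p ∈ interior X)
    (hpmin : IsMinOn (fun z => γ * g z + h z +
      ⟪z, (M : ℝ)⁻¹ • ∑ i, (γ • gradient (f i) (y i) - gradient h (y i))⟫) X p) :
    ∀ u ∈ X,
      bregmanDiv h u p ≤
        (M : ℝ)⁻¹ * ∑ i, bregmanDiv h u (y i)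
          - (1 - γ * L) / M * ∑ i, bregmanDiv h p (y i)
          - γ * (((M : ℝ)⁻¹ * ∑ i, f i p + g p) - ((M : ℝ)⁻¹ * ∑ i, f i u + g u)) := by
  intro u hu
  set A := (M : ℝ)⁻¹ • ∑ i, (γ • gradient (f i) (y i) - gradient h (y i))
  have hdiff : ∀ {φ : EuclideanSpace ℝ (Fin n) → ℝ} {z}, DifferentiableOn ℝ φ (interior X) →
      z ∈ interior X → DifferentiableAt ℝ φ z :=
    fun hφ hz => hφ.differentiableAt (isOpen_interior.mem_nhds hz)
  have hstep : ∀ i, bregmanDiv h u p + ⟪gradient h p, u - p⟫ ≤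
      bregmanDiv h u (y i) - (1 - γ * L) * bregmanDiv h p (y i) - γ * (f i p - f i u)
        - ⟪u - p, γ • gradient (f i) (y i) - gradient h (y i)⟫ := fun i =>
    bregmanDiv_add_inner_gradient_le hγ.le (hfconv i) (hrel i) (hdiff hhdiff (hy i))
      (hdiff (hfdiff i) (hy i)) hu (interior_subset (hy i)) hp (hy i)
  have hopt : (γ * g p + ⟪p, A⟫) - (γ * g u + ⟪u, A⟫) ≤ ⟪gradient h p, u - p⟫ := by
    have hψ : ConvexOn ℝ X (fun z => γ * g z + ⟪z, A⟫) := by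
      have hlin : ConvexOn ℝ X (fun z => ⟪z, A⟫) := by
        simpa [real_inner_comm] using (innerₛₗ ℝ A).convexOn hXconv
      exact ((hgconv.subset (subset_univ X) hXconv).smul hγ.le).add hlin
    have hmin : IsMinOn (fun z => (γ * g z + ⟪z, A⟫) + h z) X p := by
      convert hpmin using 2 with z
      ring
    rw [inner_gradient_eq_fderiv]
    exact hmin.sub_le_fderiv_apply_sub hψ (hdiff hhdiff hp).hasFDerivAt (interior_subset hp) hu
  have hA : ⟪p, A⟫ - ⟪u, A⟫ =
      -((M : ℝ)⁻¹ * ⟪u - p, ∑ i, (γ • gradient (f i) (y i) - gradient h (y i))⟫) := by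
    rw [← inner_sub_left, ← neg_sub, inner_neg_left, real_inner_smul_right]
  have havg := Finset.le_expect ⟨⟨0, hM⟩, Finset.mem_univ _⟩ fun i _ => hstep i
  rw [Fintype.expect_eq_sum_div_card, Fintype.card_fin, div_eq_inv_mul] at havg
  simp only [Finset.sum_sub_distrib, ← Finset.mul_sum, ← inner_sum] at havg hA
  rw [div_eq_inv_mul]
  linarith

/-- Contraction property of the operator `T_γ`: for any `u ∈ X`,
`D_h(u, T_γ(y)) ≤ (1/M)Σᵢ D_h(u,yᵢ) − ((1−γL)/M)Σᵢ D_h(T_γ(y),yᵢ) − γ(F(T_γ(y)) − F(u))`. -/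
theorem stmt16 (n M : ℕ) (hM : 0 < M)
    (X : Set (EuclideanSpace ℝ (Fin n)))
    (h g : EuclideanSpace ℝ (Fin n) → ℝ)
    (f : Fin M → EuclideanSpace ℝ (Fin n) → ℝ) (L : ℝ)
    (hXclosed : IsClosed X) (hXconv : Convex ℝ X) (hXint : (interior X).Nonempty)
    (hhconv : ConvexOn ℝ X h) (hhlsc : LowerSemicontinuous h)
    (hhdiff : DifferentiableOn ℝ h (interior X))
    (hhstrict : StrictConvexOn ℝ (interior X) h)
    (hhLeg : ∀ (w : ℕ → EuclideanSpace ℝ (Fin n)) (u : EuclideanSpace ℝ (Fin n)),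
      (∀ k, w k ∈ interior X) → u ∈ frontier X → Tendsto w atTop (nhds u) →
      Tendsto (fun k => ‖gradient h (w k)‖) atTop atTop)
    (hgconv : ConvexOn ℝ Set.univ g) (hglsc : LowerSemicontinuous g)
    (hfconv : ∀ i, ConvexOn ℝ X (f i))
    (hfdiff : ∀ i, DifferentiableOn ℝ (f i) (interior X))
    (hL : 0 < L)
    (hrel : ∀ i, ConvexOn ℝ (interior X) (fun z => L * h z - f i z))
    (hsol : ∃ s, s ∈ X ∧
      IsMinOn (fun z => (M : ℝ)⁻¹ * ∑ i, f i z + g z) X s)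
    (hsolcpt : IsCompact
      {s | s ∈ X ∧ IsMinOn (fun z => (M : ℝ)⁻¹ * ∑ i, f i z + g z) X s})
    (γ : ℝ) (hγ : 0 < γ)
    (y : Fin M → EuclideanSpace ℝ (Fin n)) (hy : ∀ i, y i ∈ interior X)
    (p : EuclideanSpace ℝ (Fin n)) (hp : p ∈ interior X)
    (hpmin : IsMinOn (fun z => γ * g z + h z +
      ⟪z, (M : ℝ)⁻¹ • ∑ i, (γ • gradient (f i) (y i) - gradient h (y i))⟫) X p) :
    ∀ u ∈ X,
      bregmanDiv h u p ≤
        (M : ℝ)⁻¹ * ∑ i, bregmanDiv h u (y i)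
          - (1 - γ * L) / M * ∑ i, bregmanDiv h p (y i)
          - γ * (((M : ℝ)⁻¹ * ∑ i, f i p + g p) - ((M : ℝ)⁻¹ * ∑ i, f i u + g u)) :=
  stmt16_general n M hM X h g f L hXconv hhdiff hgconv hfconv hfdiff hrel γ hγ y hy p hp hpmin
end
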